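/- Under the assumption Σ_{(i,j)} r_i^{\underline{2}} c_j^{\underline{2}}/(2 N^{\underline{2}}) ≤ C for all large N, the variance of the number F of matched double edges satisfies Var(F) ≤ μ(N) · (1 + 2√(2μ(N)) (1+O(1/N)) + O(μ(N)/N)), where μ(N) = E[F]. -/

import Mathlib

open Finset

/-- A double edge for entry `(i,j)` (rows and columns indexed by `ℕ`). -/
def IsDoubleEdge {N : ℕ} (rowOf colOf : Fin N → ℕ) (i j : ℕ)
    (B : Finset (Fin N × Fin N)) : Prop :=
  B.card = 2 ∧ (∀ p ∈ B, rowOf p.1 = i ∧ colOf p.2 = j) ∧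
    ∀ p ∈ B, ∀ q ∈ B, p ≠ q → p.1 ≠ q.1 ∧ p.2 ≠ q.2

instance {N : ℕ} (rowOf colOf : Fin N → ℕ) (i j : ℕ) :
    DecidablePred (IsDoubleEdge rowOf colOf i j) := fun _ =>
  by unfold IsDoubleEdge; infer_instance

/-- `F σ`: the number of matched double edges under the matching `σ`. -/
def numDoubleEdges {N : ℕ} (rowOf colOf : Fin N → ℕ) (σ : Equiv.Perm (Fin N)) : ℕ :=
  ∑ i ∈ Finset.range N, ∑ j ∈ Finset.range N,
    (univ.filter (fun B : Finset (Fin N × Fin N) =>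
        IsDoubleEdge rowOf colOf i j B ∧ ∀ p ∈ B, σ p.1 = p.2)).card

/-- `E[F]` for size `N`. -/
noncomputable def expF (rowOf colOf : (N : ℕ) → Fin N → ℕ) (N : ℕ) : ℝ :=
  (∑ σ : Equiv.Perm (Fin N), (numDoubleEdges (rowOf N) (colOf N) σ : ℝ)) / Nat.factorial N

/-- `Var(F)` for size `N`. -/
noncomputable def varF (rowOf colOf : (N : ℕ) → Fin N → ℕ) (N : ℕ) : ℝ :=
  (∑ σ : Equiv.Perm (Fin N), (numDoubleEdges (rowOf N) (colOf N) σ : ℝ) ^ 2)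
      / Nat.factorial N
    - (expF rowOf colOf N) ^ 2

/-- `μ(N) = ∑_{i,j} r_i^{\underline{2}} c_j^{\underline{2}} / (2 N^{\underline{2}})`. -/
noncomputable def muN (r c : ℕ → ℕ → ℕ) (N : ℕ) : ℝ :=
  ∑ i ∈ Finset.range N, ∑ j ∈ Finset.range N,
    (Nat.descFactorial (r N i) 2 * Nat.descFactorial (c N j) 2 : ℝ)
      / (2 * Nat.descFactorial N 2)

/-!
Write `F σ` as the number of members `B` of the family `D` of double edges (with entry in
`[0, N)²`) whose two pairs are both matched by `σ`. A set of `k` pairs forming a partial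
bijection is matched by exactly `(N - k)!` permutations, so `E F = |D| / N^{(2)} = μ` and
`E F² = ∑_{B, B'} P(B ∪ B' matched)`. In this double sum, `B' = B` contributes `μ`; the
`B' ≠ B` meeting `B` number at most `2s` per `B`, where `s ≤ (r_i - 1)(c_j - 1) ≤ √(2|D|)`
bounds the number of double edges through a point, and each contributes at most `1 / N^{(3)}`;
the disjoint pairs contribute at most `|D|² / N^{(4)} = μ² (1 + O(1/N))`. Subtracting `μ²`
leaves `μ (1 + 2 √(2μ) (1 + O(1/N)) + O(μ/N))`, with explicit constants.
-/

open Equiv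
open scoped Nat

lemma two_mul_card_image_pair {β : Type*} [DecidableEq β] {T : Finset (β × β)}
    (hswap : ∀ x ∈ T, x.swap ∈ T) (hne : ∀ x ∈ T, x.1 ≠ x.2) :
    2 * #(T.image fun x => ({x.1, x.2} : Finset β)) = #T := by
  rw [card_eq_sum_card_image (fun x => ({x.1, x.2} : Finset β)) T, mul_comm]
  refine (sum_const_nat fun B hB => ?_).symm
  obtain ⟨x, hx, rfl⟩ := mem_image.1 hB
  have hfiber : {y ∈ T | ({y.1, y.2} : Finset β) = {x.1, x.2}} = {x, x.swap} := by
    ext y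
    simp only [mem_filter, mem_insert, mem_singleton, ← coe_inj, coe_pair, Set.pair_eq_pair_iff,
      Prod.ext_iff, Prod.fst_swap, Prod.snd_swap]
    constructor
    · exact fun h => h.2
    · rintro (h | h)
      · exact ⟨by rwa [show y = x from Prod.ext h.1 h.2], Or.inl h⟩
      · exact ⟨by rw [show y = x.swap from Prod.ext h.1 h.2]; exact hswap x hx, Or.inr h⟩
  rw [hfiber, card_pair]
  exact fun h => hne x hx (congrArg Prod.fst h)

lemma three_le_card_union_of_ne {β : Type*} [DecidableEq β] {B B' : Finset β} (hB : #B = 2)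
    (hB' : #B' = 2) (hne : B' ≠ B) : 3 ≤ #(B ∪ B') := by
  by_contra! h
  have hunion : B ∪ B' = B := (eq_of_subset_of_card_le subset_union_left (by omega)).symm
  exact hne (eq_of_subset_of_card_le (hunion ▸ subset_union_right) (by omega))

section PermsThrough

variable {α : Type*} [Fintype α] [DecidableEq α]

def permsThrough (S : Finset (α × α)) : Finset (Perm α) := {σ | ∀ p ∈ S, σ p.1 = p.2}

@[simp]
lemma mem_permsThrough {S : Finset (α × α)} {σ : Perm α} :
    σ ∈ permsThrough S ↔ ∀ p ∈ S, σ p.1 = p.2 := by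
  simp [permsThrough]

lemma permsThrough_union (S T : Finset (α × α)) :
    permsThrough (S ∪ T) = permsThrough S ∩ permsThrough T := by
  ext σ
  simp only [mem_inter, mem_permsThrough, forall_mem_union]

lemma card_permsThrough_of_injOn {S : Finset (α × α)}
    (hfst : Set.InjOn Prod.fst (S : Set (α × α))) (hsnd : Set.InjOn Prod.snd (S : Set (α × α))) :
    #(permsThrough S) = (Fintype.card α - #S)! := by
  classical
  let e₀ : (Prod.fst '' (S : Set (α × α))) ≃ (Prod.snd '' (S : Set (α × α))) :=
    (Equiv.Set.imageOfInjOn _ _ hfst).symm.trans (Equiv.Set.imageOfInjOn _ _ hsnd)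
  have he₀ : ∀ p (hp : p ∈ S), (e₀ ⟨p.1, p, hp, rfl⟩ : α) = p.2 := by
    intro p hp
    have : (Equiv.Set.imageOfInjOn _ _ hfst).symm ⟨p.1, p, hp, rfl⟩ = ⟨p, hp⟩ :=
      (Equiv.symm_apply_eq _).2 rfl
    change ((Equiv.Set.imageOfInjOn _ _ hsnd)
      ((Equiv.Set.imageOfInjOn _ _ hfst).symm ⟨p.1, p, hp, rfl⟩) : α) = p.2
    rw [this]
    rfl
  have hcompl : ∀ f : α × α → α, Set.InjOn f S →
      Fintype.card ((f '' (S : Set (α × α)))ᶜ : Set α) = Fintype.card α - #S := by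
    intro f hf
    rw [Fintype.card_compl_set, Fintype.card_congr (Equiv.Set.imageOfInjOn f _ hf).symm]
    simp
  calc #(permsThrough S)
      = Fintype.card {σ : Perm α // ∀ x : Prod.fst '' (S : Set (α × α)), σ x = e₀ x} := by
        rw [← Fintype.card_coe]
        refine Fintype.card_congr (Equiv.subtypeEquivRight fun σ => ?_)
        simp only [mem_permsThrough, Subtype.forall]
        constructor
        · rintro h _ ⟨p, hp, rfl⟩
          rw [he₀ p hp, h p hp]
        · intro h p hp
          rw [h p.1 ⟨p, hp, rfl⟩, he₀ p hp]
    _ = Fintype.card (((Prod.fst '' (S : Set (α × α)))ᶜ : Set α)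
          ≃ ((Prod.snd '' (S : Set (α × α)))ᶜ : Set α)) :=
        Fintype.card_congr (Equiv.Set.compl e₀)
    _ = (Fintype.card α - #S)! := by
        rw [Fintype.card_equiv (Fintype.equivOfCardEq
          ((hcompl _ hfst).trans (hcompl _ hsnd).symm)), hcompl _ hfst]

lemma card_permsThrough_le (S : Finset (α × α)) : #(permsThrough S) ≤ (Fintype.card α - #S)! := by
  obtain hempty | ⟨σ, hσ⟩ := (permsThrough S).eq_empty_or_nonempty
  · simp [hempty]
  rw [mem_permsThrough] at hσ
  refine (card_permsThrough_of_injOn (fun p hp q hq h => ?_) (fun p hp q hq h => ?_)).le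
  · exact Prod.ext h (by rw [← hσ p hp, ← hσ q hq, h])
  · exact Prod.ext (σ.injective (by rw [hσ p hp, hσ q hq, h])) h

lemma sum_card_filter_mem_permsThrough {ι : Type*} (I : Finset ι) (S : ι → Finset (α × α)) :
    ∑ σ : Perm α, #{i ∈ I | σ ∈ permsThrough (S i)} = ∑ i ∈ I, #(permsThrough (S i)) := by
  have := sum_card_bipartiteAbove_eq_sum_card_bipartiteBelow (s := univ) (t := I)
    (r := fun σ i => σ ∈ permsThrough (S i))
  simpa only [bipartiteAbove, bipartiteBelow, filter_univ_mem] using this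

lemma sum_sq_card_filter_mem_permsThrough (D : Finset (Finset (α × α))) :
    ∑ σ : Perm α, #{B ∈ D | σ ∈ permsThrough B} ^ 2
      = ∑ B ∈ D, ∑ B' ∈ D, #(permsThrough (B ∪ B')) := by
  rw [← sum_product', ← sum_card_filter_mem_permsThrough]
  refine sum_congr rfl fun σ _ => ?_
  rw [sq, ← card_product, ← filter_product]
  simp only [permsThrough_union, mem_inter]

variable {D : Finset (Finset (α × α))}

lemma sum_card_filter_mem_permsThrough_of_injOn (hD : ∀ B ∈ D,
      #B = 2 ∧ Set.InjOn Prod.fst (B : Set (α × α)) ∧ Set.InjOn Prod.snd (B : Set (α × α))) :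
    ∑ σ : Perm α, #{B ∈ D | σ ∈ permsThrough B} = #D * (Fintype.card α - 2)! := by
  refine (sum_card_filter_mem_permsThrough D id).trans (sum_const_nat fun B hB => ?_)
  obtain ⟨hcard, hfst, hsnd⟩ := hD B hB
  rw [id, card_permsThrough_of_injOn hfst hsnd, hcard]

lemma sum_card_permsThrough_union_le (hD : ∀ B ∈ D, #B = 2) {s : ℕ}
    (hs : ∀ p, #{B ∈ D | p ∈ B} ≤ s) {B : Finset (α × α)} (hB : B ∈ D) :
    ∑ B' ∈ D, #(permsThrough (B ∪ B'))
      ≤ (Fintype.card α - 2)! + 2 * s * (Fintype.card α - 3)! + #D * (Fintype.card α - 4)! := by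
  set n := Fintype.card α
  have hle : ∀ S : Finset (α × α), ∀ k ≤ #S, #(permsThrough S) ≤ (n - k)! := fun S k hk =>
    (card_permsThrough_le S).trans (Nat.factorial_le (by omega))
  rw [← sum_filter_not_add_sum_filter D (Disjoint B)]
  have hB_meets : B ∈ {B' ∈ D | ¬Disjoint B B'} := by
    rw [mem_filter, disjoint_self_iff_empty, ← card_eq_zero, hD B hB]
    exact ⟨hB, two_ne_zero⟩
  have hmeet : #{B' ∈ D | ¬Disjoint B B'} ≤ 2 * s := by
    calc #{B' ∈ D | ¬Disjoint B B'} ≤ #(B.biUnion fun p => {B' ∈ D | p ∈ B'}) := by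
          refine card_le_card fun B' hB' => ?_
          obtain ⟨hB'D, hnd⟩ := mem_filter.1 hB'
          obtain ⟨p, hpB, hpB'⟩ := not_disjoint_iff.1 hnd
          exact mem_biUnion.2 ⟨p, hpB, mem_filter.2 ⟨hB'D, hpB'⟩⟩
      _ ≤ #B * s := card_biUnion_le_card_mul _ _ _ fun p _ => hs p
      _ = 2 * s := by rw [hD B hB]
  refine add_le_add ?_ ?_
  · rw [← add_sum_erase _ _ hB_meets, union_self]
    refine add_le_add ?_ ?_
    · exact hle B 2 (hD B hB).ge
    · refine (sum_le_card_nsmul _ _ ((n - 3)!) fun B' hB' => ?_).trans ?_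
      · obtain ⟨hne, hB'D, -⟩ := by simpa using hB'
        exact hle _ 3 (three_le_card_union_of_ne (hD B hB) (hD B' hB'D) hne)
      · rw [smul_eq_mul]
        gcongr
        exact (card_erase_le).trans hmeet
  · refine (sum_le_card_nsmul _ _ ((n - 4)!) fun B' hB' => ?_).trans ?_
    · obtain ⟨hB'D, hdisj⟩ := mem_filter.1 hB'
      exact hle _ 4 (by rw [card_union_of_disjoint hdisj, hD B hB, hD B' hB'D])
    · rw [smul_eq_mul]
      exact Nat.mul_le_mul_right _ (card_filter_le _ _)

lemma sum_sq_card_filter_mem_permsThrough_le (hD : ∀ B ∈ D, #B = 2) {s : ℕ}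
    (hs : ∀ p, #{B ∈ D | p ∈ B} ≤ s) :
    ∑ σ : Perm α, #{B ∈ D | σ ∈ permsThrough B} ^ 2
      ≤ #D * ((Fintype.card α - 2)! + 2 * s * (Fintype.card α - 3)!
        + #D * (Fintype.card α - 4)!) := by
  rw [sum_sq_card_filter_mem_permsThrough, ← smul_eq_mul]
  exact sum_le_card_nsmul _ _ _ fun B hB => sum_card_permsThrough_union_le hD hs hB

end PermsThrough

section DoubleEdges

variable {N : ℕ} {rowOf colOf : Fin N → ℕ} {i j : ℕ} {B : Finset (Fin N × Fin N)}

lemma IsDoubleEdge.injOn_fst (h : IsDoubleEdge rowOf colOf i j B) :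
    Set.InjOn Prod.fst (B : Set (Fin N × Fin N)) := fun p hp q hq hpq => by
  by_contra hne
  exact (h.2.2 p hp q hq hne).1 hpq

lemma IsDoubleEdge.injOn_snd (h : IsDoubleEdge rowOf colOf i j B) :
    Set.InjOn Prod.snd (B : Set (Fin N × Fin N)) := fun p hp q hq hpq => by
  by_contra hne
  exact (h.2.2 p hp q hq hne).2 hpq

lemma IsDoubleEdge.entry_eq (h : IsDoubleEdge rowOf colOf i j B) {p : Fin N × Fin N}
    (hp : p ∈ B) : rowOf p.1 = i ∧ colOf p.2 = j :=
  h.2.1 p hp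

variable (rowOf colOf)

def doubleEdgesAt (i j : ℕ) : Finset (Finset (Fin N × Fin N)) :=
  {B | IsDoubleEdge rowOf colOf i j B}

def doubleEdges : Finset (Finset (Fin N × Fin N)) :=
  (range N ×ˢ range N).biUnion fun ij => doubleEdgesAt rowOf colOf ij.1 ij.2

variable {rowOf colOf}

@[simp]
lemma mem_doubleEdgesAt : B ∈ doubleEdgesAt rowOf colOf i j ↔ IsDoubleEdge rowOf colOf i j B := by
  simp [doubleEdgesAt]

lemma mem_doubleEdges :
    B ∈ doubleEdges rowOf colOf ↔ ∃ i < N, ∃ j < N, IsDoubleEdge rowOf colOf i j B := by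
  simp [doubleEdges]

lemma pairwiseDisjoint_doubleEdgesAt (s : Finset (ℕ × ℕ)) :
    (s : Set (ℕ × ℕ)).PairwiseDisjoint fun ij => doubleEdgesAt rowOf colOf ij.1 ij.2 := by
  intro ij _ ij' _ hne
  refine disjoint_left.2 fun B hB hB' => hne ?_
  rw [mem_doubleEdgesAt] at hB hB'
  obtain ⟨p, hp⟩ := card_pos.1 (hB.1 ▸ two_pos)
  obtain ⟨hi, hj⟩ := hB.entry_eq hp
  obtain ⟨hi', hj'⟩ := hB'.entry_eq hp
  exact Prod.ext (hi.symm.trans hi') (hj.symm.trans hj')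

variable (rowOf colOf)

lemma two_mul_card_doubleEdgesAt (i j : ℕ) :
    2 * #(doubleEdgesAt rowOf colOf i j)
      = (#{t | rowOf t = i}).descFactorial 2 * (#{t | colOf t = j}).descFactorial 2 := by
  set R : Finset (Fin N) := {t | rowOf t = i}
  set C : Finset (Fin N) := {t | colOf t = j}
  set T := {x ∈ (R ×ˢ C) ×ˢ (R ×ˢ C) | x.1.1 ≠ x.2.1 ∧ x.1.2 ≠ x.2.2}
  have himage : doubleEdgesAt rowOf colOf i j = T.image fun x => {x.1, x.2} := by
    ext B
    simp only [mem_doubleEdgesAt, mem_image, T, R, C, mem_filter, mem_product, mem_univ, true_and]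
    constructor
    · intro h
      obtain ⟨p, q, hpq, rfl⟩ := card_eq_two.1 h.1
      have hp := h.2.1 p (by simp)
      have hq := h.2.1 q (by simp)
      exact ⟨(p, q), ⟨⟨⟨hp.1, hp.2⟩, hq.1, hq.2⟩, h.2.2 p (by simp) q (by simp) hpq⟩, rfl⟩
    · rintro ⟨⟨p, q⟩, ⟨⟨⟨hp1, hp2⟩, hq1, hq2⟩, hne1, hne2⟩, rfl⟩
      refine ⟨card_pair fun h => hne1 (congrArg Prod.fst h), ?_, ?_⟩
      · simp_all
      · simp only [mem_insert, mem_singleton]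
        rintro x (rfl | rfl) y (rfl | rfl) hxy <;> simp_all [eq_comm]
  have hT : #T = #R.offDiag * #C.offDiag := by
    rw [← card_product]
    refine card_nbij' (fun x => ((x.1.1, x.2.1), (x.1.2, x.2.2)))
      (fun y => ((y.1.1, y.2.1), (y.1.2, y.2.2))) ?_ ?_ (fun _ _ => rfl) (fun _ _ => rfl)
    · intro x hx
      simp_all [T]
    · intro y hy
      simp_all [T]
  have hdesc : ∀ n : ℕ, n * n - n = n.descFactorial 2 := fun n => by
    rw [Nat.descFactorial_succ, Nat.descFactorial_one, Nat.sub_one_mul]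
  rw [himage, two_mul_card_image_pair, hT, offDiag_card, offDiag_card, hdesc, hdesc]
  · intro x hx
    simp only [T, mem_filter, mem_product, Prod.fst_swap, Prod.snd_swap] at hx ⊢
    exact ⟨⟨hx.1.2, hx.1.1⟩, Ne.symm hx.2.1, Ne.symm hx.2.2⟩
  · exact fun x hx h => (mem_filter.1 hx).2.1 (congrArg Prod.fst h)

lemma two_mul_card_doubleEdges :
    2 * #(doubleEdges rowOf colOf) = ∑ i ∈ range N, ∑ j ∈ range N,
      (#{t | rowOf t = i}).descFactorial 2 * (#{t | colOf t = j}).descFactorial 2 := by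
  rw [doubleEdges, card_biUnion (pairwiseDisjoint_doubleEdgesAt _), sum_product, mul_sum]
  simp only [mul_sum, two_mul_card_doubleEdgesAt]

lemma numDoubleEdges_eq_card_filter (σ : Perm (Fin N)) :
    numDoubleEdges rowOf colOf σ = #{B ∈ doubleEdges rowOf colOf | σ ∈ permsThrough B} := by
  rw [doubleEdges, filter_biUnion, card_biUnion, sum_product]
  · simp only [numDoubleEdges, doubleEdgesAt, filter_filter, mem_permsThrough]
  · exact (pairwiseDisjoint_doubleEdgesAt _).mono fun ij => filter_subset _ _

lemma card_filter_doubleEdgesAt_mem_le (p : Fin N × Fin N) :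
    #{B ∈ doubleEdgesAt rowOf colOf (rowOf p.1) (colOf p.2) | p ∈ B}
      ≤ (#{t | rowOf t = rowOf p.1} - 1) * (#{t | colOf t = colOf p.2} - 1) := by
  set R : Finset (Fin N) := {t | rowOf t = rowOf p.1}
  set C : Finset (Fin N) := {t | colOf t = colOf p.2}
  calc _ ≤ #(((R.erase p.1) ×ˢ (C.erase p.2)).image fun q => ({p, q} : Finset _)) := by
        refine card_le_card fun B hB => ?_
        obtain ⟨h, hpB⟩ := mem_filter.1 hB
        rw [mem_doubleEdgesAt] at h
        obtain ⟨q, hq⟩ := card_eq_one.1 (by rw [card_erase_of_mem hpB, h.1])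
        have hqB : q ∈ B := mem_of_mem_erase (hq ▸ mem_singleton_self q)
        have hqp : q ≠ p := ne_of_mem_erase (hq ▸ mem_singleton_self q)
        obtain ⟨hrow, hcol⟩ := h.entry_eq hqB
        obtain ⟨hne1, hne2⟩ := h.2.2 q hqB p hpB hqp
        refine mem_image.2 ⟨q, ?_, by rw [← hq, insert_erase hpB]⟩
        simp only [mem_product, mem_erase, mem_filter, mem_univ, true_and, R, C]
        exact ⟨⟨hne1, hrow⟩, hne2, hcol⟩
    _ ≤ #((R.erase p.1) ×ˢ (C.erase p.2)) := card_image_le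
    _ = (#R - 1) * (#C - 1) := by
        rw [card_product, card_erase_of_mem (by simp [R]), card_erase_of_mem (by simp [C])]

lemma sq_card_filter_mem_doubleEdges_le (p : Fin N × Fin N) :
    #{B ∈ doubleEdges rowOf colOf | p ∈ B} ^ 2 ≤ 2 * #(doubleEdges rowOf colOf) := by
  obtain hempty | ⟨B₀, hB₀⟩ := eq_empty_or_nonempty {B ∈ doubleEdges rowOf colOf | p ∈ B}
  · simp [hempty]
  obtain ⟨hB₀D, hpB₀⟩ := mem_filter.1 hB₀
  obtain ⟨i, hi, j, hj, hB₀⟩ := mem_doubleEdges.1 hB₀D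
  obtain ⟨rfl, rfl⟩ := hB₀.entry_eq hpB₀
  set r := #{t | rowOf t = rowOf p.1}
  set c := #{t | colOf t = colOf p.2}
  have hsub : {B ∈ doubleEdges rowOf colOf | p ∈ B}
      ⊆ {B ∈ doubleEdgesAt rowOf colOf (rowOf p.1) (colOf p.2) | p ∈ B} := by
    intro B hB
    obtain ⟨hBD, hpB⟩ := mem_filter.1 hB
    obtain ⟨i', -, j', -, hB'⟩ := mem_doubleEdges.1 hBD
    obtain ⟨rfl, rfl⟩ := hB'.entry_eq hpB
    exact mem_filter.2 ⟨mem_doubleEdgesAt.2 hB', hpB⟩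
  have hentry : doubleEdgesAt rowOf colOf (rowOf p.1) (colOf p.2) ⊆ doubleEdges rowOf colOf :=
    fun B hB => mem_doubleEdges.2 ⟨_, hi, _, hj, mem_doubleEdgesAt.1 hB⟩
  calc #{B ∈ doubleEdges rowOf colOf | p ∈ B} ^ 2 ≤ ((r - 1) * (c - 1)) ^ 2 :=
        Nat.pow_le_pow_left
          ((card_le_card hsub).trans (card_filter_doubleEdgesAt_mem_le _ _ p)) 2
    _ ≤ r.descFactorial 2 * c.descFactorial 2 := by
        rw [Nat.descFactorial_succ r 1, Nat.descFactorial_succ c 1, Nat.descFactorial_one,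
          Nat.descFactorial_one, mul_pow, sq, sq]
        exact Nat.mul_le_mul (Nat.mul_le_mul_left _ (Nat.sub_le r 1))
          (Nat.mul_le_mul_left _ (Nat.sub_le c 1))
    _ = 2 * #(doubleEdgesAt rowOf colOf (rowOf p.1) (colOf p.2)) :=
        (two_mul_card_doubleEdgesAt _ _ _ _).symm
    _ ≤ 2 * #(doubleEdges rowOf colOf) := Nat.mul_le_mul_left 2 (card_le_card hentry)

lemma sum_numDoubleEdges :
    ∑ σ : Perm (Fin N), numDoubleEdges rowOf colOf σ = #(doubleEdges rowOf colOf) * (N - 2)! := by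
  simp only [numDoubleEdges_eq_card_filter]
  rw [sum_card_filter_mem_permsThrough_of_injOn, Fintype.card_fin]
  intro B hB
  obtain ⟨i, -, j, -, h⟩ := mem_doubleEdges.1 hB
  exact ⟨h.1, h.injOn_fst, h.injOn_snd⟩

lemma sum_sq_numDoubleEdges_le :
    ∑ σ : Perm (Fin N), numDoubleEdges rowOf colOf σ ^ 2
      ≤ #(doubleEdges rowOf colOf) * ((N - 2)!
        + 2 * Nat.sqrt (2 * #(doubleEdges rowOf colOf)) * (N - 3)!
        + #(doubleEdges rowOf colOf) * (N - 4)!) := by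
  simp only [numDoubleEdges_eq_card_filter]
  have hD : ∀ B ∈ doubleEdges rowOf colOf, #B = 2 := fun B hB => by
    obtain ⟨i, -, j, -, h⟩ := mem_doubleEdges.1 hB
    exact h.1
  simpa only [Fintype.card_fin] using sum_sq_card_filter_mem_permsThrough_le hD
    fun p => Nat.le_sqrt'.2 (sq_card_filter_mem_doubleEdges_le rowOf colOf p)

end DoubleEdges

lemma sqrt_mul_sub_one_le {n : ℝ} (hn : 6 ≤ n) :
    √(n * (n - 1)) ≤ (1 + 20 / n) * (n - 2) := by
  have hsqrt : √(n * (n - 1)) ≤ n := (Real.sqrt_le_left (by linarith)).2 (by nlinarith)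
  have h40 : 40 / n ≤ 18 := by rw [div_le_iff₀ (by linarith)]; linarith
  have hexpand : (1 + 20 / n) * (n - 2) = n + 18 - 40 / n := by field_simp; ring
  linarith

lemma mul_sub_one_div_le {n : ℝ} (hn : 6 ≤ n) :
    n * (n - 1) / ((n - 2) * (n - 3)) ≤ 1 + 20 / n := by
  rw [div_le_iff₀ (by nlinarith), one_add_div (by positivity), div_mul_eq_mul_div,
    le_div_iff₀ (by positivity)]
  nlinarith

section Variance

variable (rowOf colOf : (N : ℕ) → Fin N → ℕ) {N : ℕ}

lemma expF_eq (hN : 2 ≤ N) :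
    expF rowOf colOf N = #(doubleEdges (rowOf N) (colOf N)) / N.descFactorial 2 := by
  rw [expF, ← Nat.cast_sum, sum_numDoubleEdges, ← Nat.factorial_mul_descFactorial hN]
  push_cast
  have : ((N - 2)! : ℝ) ≠ 0 := by positivity
  field_simp

lemma muN_eq_expF (r c : ℕ → ℕ → ℕ) (hrow : ∀ i, #{t | rowOf N t = i} = r N i)
    (hcol : ∀ j, #{t | colOf N t = j} = c N j) (hN : 2 ≤ N) :
    muN r c N = expF rowOf colOf N := by
  have h : (2 * #(doubleEdges (rowOf N) (colOf N)) : ℝ) = ∑ i ∈ range N, ∑ j ∈ range N,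
      ((r N i).descFactorial 2 * (c N j).descFactorial 2 : ℝ) := by
    exact_mod_cast (two_mul_card_doubleEdges (rowOf N) (colOf N)).trans (by simp only [hrow, hcol])
  rw [muN, expF_eq rowOf colOf hN]
  simp only [← sum_div, ← h, mul_div_mul_left _ _ (two_ne_zero (α := ℝ))]

lemma sum_sq_numDoubleEdges_div_le (hN : 4 ≤ N) :
    (∑ σ : Perm (Fin N), (numDoubleEdges (rowOf N) (colOf N) σ : ℝ) ^ 2) / N !
      ≤ expF rowOf colOf N + 2 * expF rowOf colOf N
        * Nat.sqrt (2 * #(doubleEdges (rowOf N) (colOf N))) / (N - 2)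
        + expF rowOf colOf N ^ 2 * (N * (N - 1) / ((N - 2) * (N - 3))) := by
  have h := sum_sq_numDoubleEdges_le (rowOf N) (colOf N)
  rw [expF_eq rowOf colOf (by omega)]
  obtain ⟨m, rfl⟩ : ∃ m, N = m + 4 := ⟨N - 4, by omega⟩
  set d := #(doubleEdges (rowOf (m + 4)) (colOf (m + 4)))
  set s := Nat.sqrt (2 * d)
  simp only [show m + 4 - 2 = m + 2 by omega, show m + 4 - 3 = m + 1 by omega,
    Nat.add_sub_cancel] at h
  have hR : (∑ σ : Perm (Fin (m + 4)), (numDoubleEdges (rowOf (m + 4)) (colOf (m + 4)) σ : ℝ) ^ 2)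
      ≤ d * ((m + 2)! + 2 * s * (m + 1)! + d * m !) := by exact_mod_cast h
  rw [div_le_iff₀ (by positivity)]
  refine hR.trans_eq ?_
  simp only [Nat.factorial_succ, Nat.cast_descFactorial_two]
  push_cast
  rw [show (m : ℝ) + 4 - 1 = m + 3 by ring, show (m : ℝ) + 4 - 2 = m + 2 by ring,
    show (m : ℝ) + 4 - 3 = m + 1 by ring]
  field_simp
  ring

lemma varF_le_expF (hN : 6 ≤ N) :
    varF rowOf colOf N ≤ expF rowOf colOf N * (1 + 2 * √(2 * expF rowOf colOf N) * (1 + 20 / N)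
      + 20 * expF rowOf colOf N / N) := by
  have hμ := expF_eq rowOf colOf (N := N) (by omega)
  set μ := expF rowOf colOf N
  set s : ℝ := (Nat.sqrt (2 * #(doubleEdges (rowOf N) (colOf N))) : ℝ)
  have hn : (6 : ℝ) ≤ N := by exact_mod_cast hN
  have hμ0 : 0 ≤ μ := by rw [hμ]; positivity
  have hs : s ≤ √(2 * μ) * ((1 + 20 / N) * (N - 2)) := by
    have hN0 : (N : ℝ) * (N - 1) ≠ 0 := by nlinarith
    calc s ≤ √(2 * μ * (N * (N - 1))) := by
          rw [hμ, Nat.cast_descFactorial_two, mul_assoc, div_mul_cancel₀ _ hN0]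
          exact_mod_cast Real.nat_sqrt_le_real_sqrt
      _ = √(2 * μ) * √(N * (N - 1)) := Real.sqrt_mul (by positivity) _
      _ ≤ _ := by gcongr; exact sqrt_mul_sub_one_le hn
  have hmeet : 2 * μ * s / (N - 2) ≤ 2 * μ * (√(2 * μ) * (1 + 20 / N)) := by
    rw [mul_div_assoc]
    gcongr
    rwa [div_le_iff₀ (by linarith), mul_assoc]
  have hdisj : μ ^ 2 * (N * (N - 1) / ((N - 2) * (N - 3))) ≤ μ ^ 2 * (1 + 20 / N) := by
    gcongr
    exact mul_sub_one_div_le hn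
  rw [varF]
  linarith [sum_sq_numDoubleEdges_div_le rowOf colOf (N := N) (by omega),
    show μ * (1 + 2 * √(2 * μ) * (1 + 20 / N) + 20 * μ / N)
      = μ + 2 * μ * (√(2 * μ) * (1 + 20 / N)) + μ ^ 2 * (1 + 20 / N) - μ ^ 2 by ring]

end Variance

theorem varF_le_of_mu_bounded_general
    (r c : ℕ → ℕ → ℕ)
    (rowOf colOf : (N : ℕ) → Fin N → ℕ)
    (hrow : ∀ N i, (univ.filter (fun t => rowOf N t = i)).card = r N i)
    (hcol : ∀ N j, (univ.filter (fun t => colOf N t = j)).card = c N j) :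
    ∃ C' : ℝ, ∃ N₁ : ℕ, ∀ N ≥ N₁,
      varF rowOf colOf N
        ≤ muN r c N * (1 + 2 * Real.sqrt (2 * muN r c N) * (1 + C' / N)
            + C' * muN r c N / N) := by
  refine ⟨20, 6, fun N hN => ?_⟩
  rw [muN_eq_expF rowOf colOf r c (hrow N) (hcol N) (by omega)]
  exact varF_le_expF rowOf colOf hN

/-- if `μ(N) ≤ C` for all large `N`, then
`Var(F) ≤ μ(N)·(1 + 2√(2 μ(N))·(1 + O(1/N)) + O(μ(N)/N))`. -/
theorem varF_le_of_mu_bounded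
    (r c : ℕ → ℕ → ℕ)
    (hrsupp : ∀ N i, N ≤ i → r N i = 0) (hcsupp : ∀ N j, N ≤ j → c N j = 0)
    (hrN : ∀ N, ∑ i ∈ Finset.range N, r N i = N)
    (hcN : ∀ N, ∑ j ∈ Finset.range N, c N j = N)
    (rowOf colOf : (N : ℕ) → Fin N → ℕ)
    (hrow : ∀ N i, (univ.filter (fun t => rowOf N t = i)).card = r N i)
    (hcol : ∀ N j, (univ.filter (fun t => colOf N t = j)).card = c N j)
    (hC : ∃ C : ℝ, ∃ N₀ : ℕ, ∀ N ≥ N₀, muN r c N ≤ C) :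
    ∃ C' : ℝ, ∃ N₁ : ℕ, ∀ N ≥ N₁,
      varF rowOf colOf N
        ≤ muN r c N * (1 + 2 * Real.sqrt (2 * muN r c N) * (1 + C' / N)
            + C' * muN r c N / N) :=
  varF_le_of_mu_bounded_general r c rowOf colOf hrow hcol
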